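/- Let R be a Jacobi-orthogonal algebraic curvature tensor on a 3-dimensional scalar product space (V, g), and let (A, B, C) be a basis of V consisting of pairwise orthogonal nonnull vectors. Then (ε_C · R(B, A, A, B) − ε_B · R(C, A, A, C)) · R(A, B, B, C) = 0. -/

import Mathlib

/- Common definitions: scalar product space (V, g) with nondegenerate symmetric bilinear
form g, algebraic curvature tensors, Jacobi operators, and derived notions. -/

variable {V : Type*} [AddCommGroup V] [Module ℝ V]

/-- `R` is quadrilinear and satisfies the symmetries of an algebraic curvature tensor. -/
def IsCurv (R : V → V → V → V → ℝ) : Prop :=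
  (∀ (a : ℝ) (X X' Y Z W : V), R (a • X + X') Y Z W = a * R X Y Z W + R X' Y Z W) ∧
  (∀ (a : ℝ) (X Y Y' Z W : V), R X (a • Y + Y') Z W = a * R X Y Z W + R X Y' Z W) ∧
  (∀ (a : ℝ) (X Y Z Z' W : V), R X Y (a • Z + Z') W = a * R X Y Z W + R X Y Z' W) ∧
  (∀ (a : ℝ) (X Y Z W W' : V), R X Y Z (a • W + W') = a * R X Y Z W + R X Y Z W') ∧
  (∀ X Y Z W : V, R X Y Z W = - R Y X Z W) ∧
  (∀ X Y Z W : V, R X Y Z W = - R X Y W Z) ∧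
  (∀ X Y Z W : V, R X Y Z W = R Z W X Y) ∧
  (∀ X Y Z W : V, R X Y Z W + R Y Z X W + R Z X Y W = 0)

/-- `J X` is the Jacobi operator of `R`: the unique linear map with
`g (J X Y) Z = R Y X X Z` for all `Y Z`. -/
def IsJacobi (g : V →ₗ[ℝ] V →ₗ[ℝ] ℝ) (R : V → V → V → V → ℝ) (J : V → V →ₗ[ℝ] V) : Prop :=
  ∀ X Y Z : V, g (J X Y) Z = R Y X X Z

/-- Jacobi-orthogonality: `g (J_X Y) (J_Y X) = 0` for all mutually orthogonal unit `X Y`. -/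
def JacobiOrthogonal (g : V →ₗ[ℝ] V →ₗ[ℝ] ℝ) (J : V → V →ₗ[ℝ] V) : Prop :=
  ∀ X Y : V, (g X X = 1 ∨ g X X = -1) → (g Y Y = 1 ∨ g Y Y = -1) → g X Y = 0 →
    g (J X Y) (J Y X) = 0

/-! Jacobi-orthogonality is invariant under rescaling `X` and `Y`, so it holds for every orthogonal
pair of nonnull vectors. Applied to `A` and `s • B + C` and expanded in the orthogonal basis, it
says that a cubic polynomial in `s` vanishes whenever `s • B + C` is nonnull, that is, for all but
at most two values of `s`; so all its coefficients vanish. The constant coefficient gives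
`R(B,A,A,C) R(A,C,C,B) = 0`, and then the coefficient of `s²` is the claimed identity. -/

open Polynomial in
lemma cubic_coeffs_eq_zero_of_eval_eq_zero_off_quadratic {p₀ p₁ p₂ p₃ b c : ℝ} (hc : c ≠ 0)
    (h : ∀ s : ℝ, s ^ 2 * b + c ≠ 0 → p₃ * s ^ 3 + p₂ * s ^ 2 + p₁ * s + p₀ = 0) :
    p₀ = 0 ∧ p₁ = 0 ∧ p₂ = 0 ∧ p₃ = 0 := by
  set P : ℝ[X] := C p₃ * X ^ 3 + C p₂ * X ^ 2 + C p₁ * X + C p₀ with hP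
  have hQ : C b * X ^ 2 + C c ≠ 0 := fun h0 => hc (by simpa using congrArg (coeff · 0) h0)
  have hPQ : P * (C b * X ^ 2 + C c) = 0 := Polynomial.funext fun s => by
    by_cases hs : s ^ 2 * b + c = 0
    · simp [hs, mul_comm b]
    · simp [hP, h s hs]
  have hP0 : P = 0 := (mul_eq_zero.mp hPQ).resolve_right hQ
  refine ⟨?_, ?_, ?_, ?_⟩
  · simpa [hP] using congrArg (coeff · 0) hP0
  · simpa [hP, coeff_X] using congrArg (coeff · 1) hP0
  · simpa [hP, coeff_X] using congrArg (coeff · 2) hP0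
  · simpa [hP, coeff_X] using congrArg (coeff · 3) hP0

section ScalarProduct

variable {g : V →ₗ[ℝ] V →ₗ[ℝ] ℝ}

lemma exists_smul_unit_of_apply_self_ne_zero {X : V} (hX : g X X ≠ 0) :
    ∃ a : ℝ, a ≠ 0 ∧ (g (a • X) (a • X) = 1 ∨ g (a • X) (a • X) = -1) := by
  have habs : 0 < |g X X| := abs_pos.mpr hX
  refine ⟨(√|g X X|)⁻¹, inv_ne_zero (Real.sqrt_pos.mpr habs).ne', ?_⟩
  have hval : g ((√|g X X|)⁻¹ • X) ((√|g X X|)⁻¹ • X) = g X X / |g X X| := by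
    simp only [map_smul, LinearMap.smul_apply, smul_eq_mul, ← mul_assoc, ← mul_inv,
      Real.mul_self_sqrt (abs_nonneg _), div_eq_inv_mul]
  rw [hval]
  rcases hX.lt_or_gt with h | h
  · right; rw [abs_of_neg h, div_neg, div_self hX]
  · left; rw [abs_of_pos h, div_self hX]

lemma apply_eq_sum_of_orthogonal_spanning {ι : Type*} [Fintype ι] {e : ι → V}
    (hgnd : ∀ x : V, (∀ y : V, g x y = 0) → x = 0)
    (horth : Pairwise fun i j => g (e i) (e j) = 0) (hnull : ∀ i, g (e i) (e i) ≠ 0)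
    (hspan : Submodule.span ℝ (Set.range e) = ⊤) (u v : V) :
    g u v = ∑ i, g u (e i) * g (e i) v / g (e i) (e i) := by
  set w := u - ∑ i, (g u (e i) / g (e i) (e i)) • e i
  have hw : g w = 0 := LinearMap.ext_on_range hspan fun j => by
    rw [map_sub, LinearMap.sub_apply, map_sum, LinearMap.sum_apply,
      Finset.sum_eq_single j (fun i _ hij => by simp [horth hij]) (by simp)]
    simp [hnull j]
  have hu : u = ∑ i, (g u (e i) / g (e i) (e i)) • e i :=
    sub_eq_zero.mp (hgnd w fun y => by rw [hw, LinearMap.zero_apply])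
  conv_lhs => rw [hu]
  simp only [map_sum, map_smul, LinearMap.sum_apply, LinearMap.smul_apply, smul_eq_mul]
  exact Finset.sum_congr rfl fun i _ => by ring

end ScalarProduct

namespace IsCurv

variable {R : V → V → V → V → ℝ}

lemma apply_self_right (hR : IsCurv R) (X Y Z : V) : R X Y Z Z = 0 := by
  linarith [hR.2.2.2.2.2.1 X Y Z Z]

lemma apply_reverse (hR : IsCurv R) (X Y Z W : V) : R X Y Z W = R W Z Y X := by
  rw [hR.2.2.2.2.2.2.1, hR.2.2.2.2.1, hR.2.2.2.2.2.1, neg_neg]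

lemma apply_smul_smul (hR : IsCurv R) (c : ℝ) (X Y W : V) :
    R X (c • Y) (c • Y) W = c ^ 2 * R X Y Y W := by
  have h₂ : ∀ Z, R X 0 Z W = 0 := fun Z => by simpa using hR.2.1 1 X 0 0 Z W
  have h₃ : R X Y 0 W = 0 := by simpa using hR.2.2.1 1 X Y 0 0 W
  have h₂' := hR.2.1 c X Y 0 (c • Y) W
  have h₃' := hR.2.2.1 c X Y Y 0 W
  simp only [add_zero, h₂, h₃] at h₂' h₃'
  rw [h₂', h₃']
  ring

end IsCurv

section Jacobi

variable {g : V →ₗ[ℝ] V →ₗ[ℝ] ℝ} {R : V → V → V → V → ℝ} {J : V → V →ₗ[ℝ] V}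

lemma IsJacobi.smul_left (hgnd : ∀ x : V, (∀ y : V, g x y = 0) → x = 0) (hR : IsCurv R)
    (hJ : IsJacobi g R J) (c : ℝ) (X : V) : J (c • X) = c ^ 2 • J X :=
  LinearMap.ext fun Y => sub_eq_zero.mp <| hgnd _ fun Z => by
    rw [map_sub, LinearMap.sub_apply, LinearMap.smul_apply, map_smul, LinearMap.smul_apply, hJ, hJ,
      hR.apply_smul_smul, smul_eq_mul, sub_self]

lemma JacobiOrthogonal.apply_eq_zero_of_nonnull (horth : JacobiOrthogonal g J)
    (hgnd : ∀ x : V, (∀ y : V, g x y = 0) → x = 0) (hR : IsCurv R) (hJ : IsJacobi g R J)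
    {X Y : V} (hX : g X X ≠ 0) (hY : g Y Y ≠ 0) (hXY : g X Y = 0) :
    g (J X Y) (J Y X) = 0 := by
  obtain ⟨a, ha, hXu⟩ := exists_smul_unit_of_apply_self_ne_zero hX
  obtain ⟨b, hb, hYu⟩ := exists_smul_unit_of_apply_self_ne_zero hY
  have h := horth (a • X) (b • Y) hXu hYu (by simp [hXY])
  simp only [hJ.smul_left hgnd hR, LinearMap.smul_apply, map_smul, LinearMap.smul_apply,
    smul_eq_mul] at h
  have hab : a ^ 2 * b * (b ^ 2 * a) ≠ 0 := by positivity
  exact (mul_eq_zero.mp (by linear_combination h : a ^ 2 * b * (b ^ 2 * a) * _ = 0)).resolve_left hab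

lemma IsJacobi.apply_apply_eq_sum {ι : Type*} [Fintype ι] (hJ : IsJacobi g R J)
    (hgsymm : ∀ x y : V, g x y = g y x) (hgnd : ∀ x : V, (∀ y : V, g x y = 0) → x = 0)
    {e : ι → V} (horth : Pairwise fun i j => g (e i) (e j) = 0)
    (hnull : ∀ i, g (e i) (e i) ≠ 0) (hspan : Submodule.span ℝ (Set.range e) = ⊤) (X Y : V) :
    g (J X Y) (J Y X) = ∑ i, R Y X X (e i) * R X Y Y (e i) / g (e i) (e i) := by
  rw [apply_eq_sum_of_orthogonal_spanning hgnd horth hnull hspan]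
  exact Finset.sum_congr rfl fun i _ => by rw [hgsymm (e i), hJ, hJ]

lemma JacobiOrthogonal.cubic_eq_zero (horth : JacobiOrthogonal g J)
    (hgsymm : ∀ x y : V, g x y = g y x) (hgnd : ∀ x : V, (∀ y : V, g x y = 0) → x = 0)
    (hR : IsCurv R) (hJ : IsJacobi g R J) {A B C : V}
    (hspan : Submodule.span ℝ ({A, B, C} : Set V) = ⊤)
    (hAB : g A B = 0) (hAC : g A C = 0) (hBC : g B C = 0)
    (hA : g A A ≠ 0) (hB : g B B ≠ 0) (hC : g C C ≠ 0) {s : ℝ} (hs : s ^ 2 * g B B + g C C ≠ 0) :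
    g B B * R A B B C * R B A A C * s ^ 3
      + (g B B * (R C A A C * R A B B C - R B A A C * R A C C B)
        - g C C * R B A A B * R A B B C) * s ^ 2
      + (g C C * (R B A A B * R A C C B - R B A A C * R A B B C)
        - g B B * R C A A C * R A C C B) * s
      + g C C * R B A A C * R A C C B = 0 := by
  have horthABC : Pairwise fun i j => g (![A, B, C] i) (![A, B, C] j) = 0 := by
    intro i j hij
    fin_cases i <;> fin_cases j <;>
      simp [hAB, hAC, hBC, hgsymm B A, hgsymm C A, hgsymm C B] at hij ⊢
  have hnull : ∀ i : Fin 3, g (![A, B, C] i) (![A, B, C] i) ≠ 0 := by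
    intro i; fin_cases i <;> assumption
  have hspan' : Submodule.span ℝ (Set.range ![A, B, C]) = ⊤ := by
    rw [Matrix.range_cons, Matrix.range_cons, Matrix.range_cons_empty, Set.singleton_union,
      Set.singleton_union]
    exact hspan
  have hY : g (s • B + C) (s • B + C) = s ^ 2 * g B B + g C C := by
    simp only [map_add, map_smul, LinearMap.add_apply, LinearMap.smul_apply, smul_eq_mul, hBC,
      hgsymm C B]
    ring
  have h := horth.apply_eq_zero_of_nonnull hgnd hR hJ hA (hY ▸ hs) (by simp [hAB, hAC])
  rw [hJ.apply_apply_eq_sum hgsymm hgnd horthABC hnull hspan', Fin.sum_univ_three] at h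
  have hCAAB := hR.apply_reverse C A A B
  have hRXYZZ := hR.apply_self_right
  obtain ⟨hadd₁, hadd₂, hadd₃, -, -, hanti₃₄, -, -⟩ := hR
  simp only [Matrix.cons_val_zero, Matrix.cons_val_one, Matrix.cons_val, hadd₁, hadd₂, hadd₃,
    hRXYZZ, hCAAB, hanti₃₄ A B C B, hanti₃₄ A C B C, mul_zero, zero_mul, zero_div,
    add_zero, zero_add] at h
  field_simp at h
  linear_combination h

end Jacobi

theorem stmt_12_general {V : Type*} [AddCommGroup V] [Module ℝ V]
(g : V →ₗ[ℝ] V →ₗ[ℝ] ℝ) (hgsymm : ∀ x y : V, g x y = g y x)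
    (hgnd : ∀ x : V, (∀ y : V, g x y = 0) → x = 0)
    (R : V → V → V → V → ℝ) (hR : IsCurv R)
    (J : V → V →ₗ[ℝ] V) (hJ : IsJacobi g R J)
    (horth : JacobiOrthogonal g J)
    (A B C : V)
    (hbasis : LinearIndependent ℝ ![A, B, C] ∧
      Submodule.span ℝ ({A, B, C} : Set V) = ⊤)
    (hAB : g A B = 0) (hAC : g A C = 0) (hBC : g B C = 0)
    (hA : g A A ≠ 0) (hB : g B B ≠ 0) (hC : g C C ≠ 0) :
    (g C C * R B A A B - g B B * R C A A C) * R A B B C = 0 := by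
  obtain ⟨hp₀, -, hp₂, -⟩ := cubic_coeffs_eq_zero_of_eval_eq_zero_off_quadratic hC fun _ hs =>
    horth.cubic_eq_zero hgsymm hgnd hR hJ hbasis.2 hAB hAC hBC hA hB hC hs
  have hqn : R B A A C * R A C C B = 0 := by
    simpa [hC] using hp₀
  linear_combination -hp₂ - g B B * hqn

/-- for a Jacobi-orthogonal R on a 3-dimensional scalar product space and a
basis (A, B, C) of pairwise orthogonal nonnull vectors,
(ε_C·R(B,A,A,B) − ε_B·R(C,A,A,C))·R(A,B,B,C) = 0. -/
theorem stmt_12 {V : Type*} [AddCommGroup V] [Module ℝ V] [FiniteDimensional ℝ V]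
    (hdim : Module.finrank ℝ V = 3)
(g : V →ₗ[ℝ] V →ₗ[ℝ] ℝ) (hgsymm : ∀ x y : V, g x y = g y x)
    (hgnd : ∀ x : V, (∀ y : V, g x y = 0) → x = 0)
    (R : V → V → V → V → ℝ) (hR : IsCurv R)
    (J : V → V →ₗ[ℝ] V) (hJ : IsJacobi g R J)
    (horth : JacobiOrthogonal g J)
    (A B C : V)
    (hbasis : LinearIndependent ℝ ![A, B, C] ∧
      Submodule.span ℝ ({A, B, C} : Set V) = ⊤)
    (hAB : g A B = 0) (hAC : g A C = 0) (hBC : g B C = 0)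
    (hA : g A A ≠ 0) (hB : g B B ≠ 0) (hC : g C C ≠ 0) :
    (g C C * R B A A B - g B B * R C A A C) * R A B B C = 0 :=
  stmt_12_general g hgsymm hgnd R hR J hJ horth A B C hbasis hAB hAC hBC hA hB hC
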